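/- arXiv:1302.1256 — 9 statements merged into one kernel-verified Lean document; each statement's English description precedes it below -/
import Mathlib

section
/- Let F be a field, k ≥ 1, V and P nonsingular k×k matrices over F, Q = P⁻¹, U = V·P, V̂ = (Vᵗ)⁻¹, Û = (Uᵗ)⁻¹. Let δ, ε, δ', ε' ∈ F satisfy δδ' + εε' = 1 and εδ' + δε' = 0. Define the linear maps F(X) = δ V̂ Xᵗ U + ε X P and G(Y) = δ' Û Yᵗ V + ε' Y Q on the space of k×k matrices over F. Then G(F(X)) = X and F(G(Y)) = Y for all k×k matrices X, Y; i.e., F∘G and G∘F are the identity transformation. -/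
/-!
The map `T X = V̂ Xᵀ V` is an involution of the matrix space, and the two encodings factor
through it: `F X = (δ T + ε) X * P` and `G Y = (δ' T + ε') (Y * Q)`, the latter because
`Û Yᵀ = V̂ (Y Q)ᵀ`. Since `T² = 1`, the conditions on the coefficients say exactly that
`(δ' T + ε') (δ T + ε) = (δδ' + εε') + (εδ' + δε') T = 1`.
-/

open Matrix

theorem smul_add_smul_one_mul_smul_add_smul_one {R A : Type*} [CommRing R] [Ring A]
    [Algebra R A] {T : A} (hT : T * T = 1) {δ ε δ' ε' : R}
    (h1 : δ * δ' + ε * ε' = 1) (h2 : ε * δ' + δ * ε' = 0) :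
    (δ' • T + ε' • 1) * (δ • T + ε • 1) = 1 := by
  calc (δ' • T + ε' • 1) * (δ • T + ε • 1)
      = (δ * δ' + ε * ε') • (1 : A) + (ε * δ' + δ * ε') • T := by
        simp only [add_mul, mul_add, smul_mul_smul, hT, mul_one, one_mul]
        module
    _ = 1 := by rw [h1, h2, one_smul, zero_smul, add_zero]

noncomputable section

variable {n R : Type*} [Fintype n] [DecidableEq n] [CommRing R]

namespace Matrix

def transposeConj (V : Matrix n n R) : Module.End R (Matrix n n R) where
  toFun X := (Vᵀ)⁻¹ * Xᵀ * V
  map_add' X Y := by simp only [transpose_add, Matrix.mul_add, Matrix.add_mul]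
  map_smul' c X := by
    simp only [transpose_smul, Matrix.mul_smul, Matrix.smul_mul, RingHom.id_apply]

theorem transposeConj_apply (V X : Matrix n n R) : transposeConj V X = (Vᵀ)⁻¹ * Xᵀ * V :=
  rfl

theorem transposeConj_mul_self {V : Matrix n n R} (hV : IsUnit V.det) :
    transposeConj V * transposeConj V = 1 := by
  ext1 X
  simp only [Module.End.mul_apply, transposeConj_apply, transpose_mul, transpose_nonsing_inv,
    transpose_transpose, Module.End.one_apply, Matrix.mul_assoc]
  rw [nonsing_inv_mul V hV, Matrix.mul_one,
    nonsing_inv_mul_cancel_left _ _ ((det_transpose V).symm ▸ hV)]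

end Matrix

namespace SuhRamchandran

def encode (V P : Matrix n n R) (δ ε : R) (X : Matrix n n R) : Matrix n n R :=
  δ • ((Vᵀ)⁻¹ * Xᵀ * (V * P)) + ε • (X * P)

def decode (V P : Matrix n n R) (δ' ε' : R) (Y : Matrix n n R) : Matrix n n R :=
  δ' • (((V * P)ᵀ)⁻¹ * Yᵀ * V) + ε' • (Y * P⁻¹)

theorem encode_eq (V P : Matrix n n R) (δ ε : R) (X : Matrix n n R) :
    encode V P δ ε X = (δ • transposeConj V + ε • 1) X * P := by
  simp only [encode, LinearMap.add_apply, LinearMap.smul_apply, transposeConj_apply,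
    Module.End.one_apply, Matrix.add_mul, Matrix.smul_mul, Matrix.mul_assoc]

theorem decode_eq (V P : Matrix n n R) (δ' ε' : R) (Y : Matrix n n R) :
    decode V P δ' ε' Y = (δ' • transposeConj V + ε' • 1) (Y * P⁻¹) := by
  simp only [decode, LinearMap.add_apply, LinearMap.smul_apply, transposeConj_apply,
    Module.End.one_apply, transpose_mul, transpose_nonsing_inv, Matrix.mul_inv_rev,
    Matrix.mul_assoc]

variable {V P : Matrix n n R} {δ ε δ' ε' : R}

theorem decode_encode (hV : IsUnit V.det) (hP : IsUnit P.det)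
    (h1 : δ * δ' + ε * ε' = 1) (h2 : ε * δ' + δ * ε' = 0) (X : Matrix n n R) :
    decode V P δ' ε' (encode V P δ ε X) = X := by
  rw [encode_eq, decode_eq, mul_nonsing_inv_cancel_right _ _ hP, ← Module.End.mul_apply,
    smul_add_smul_one_mul_smul_add_smul_one (transposeConj_mul_self hV) h1 h2,
    Module.End.one_apply]

theorem encode_decode (hV : IsUnit V.det) (hP : IsUnit P.det)
    (h1 : δ * δ' + ε * ε' = 1) (h2 : ε * δ' + δ * ε' = 0) (Y : Matrix n n R) :
    encode V P δ ε (decode V P δ' ε' Y) = Y := by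
  rw [decode_eq, encode_eq, ← Module.End.mul_apply,
    smul_add_smul_one_mul_smul_add_smul_one (transposeConj_mul_self hV)
      (by linear_combination h1) (by linear_combination h2),
    Module.End.one_apply, nonsing_inv_mul_cancel_right _ _ hP]

end SuhRamchandran

end

theorem suh_ramchandran_encodings_inverse_general
    {F : Type*} [Field F] {k : ℕ}
    (V P : Matrix (Fin k) (Fin k) F)
    (hV : IsUnit V.det) (hP : IsUnit P.det)
    (δ ε δ' ε' : F)
    (h1 : δ * δ' + ε * ε' = 1) (h2 : ε * δ' + δ * ε' = 0) :
    ∀ X Y : Matrix (Fin k) (Fin k) F,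
      (δ' • (((V * P)ᵀ)⁻¹ * (δ • ((Vᵀ)⁻¹ * Xᵀ * (V * P)) + ε • (X * P))ᵀ * V)
          + ε' • ((δ • ((Vᵀ)⁻¹ * Xᵀ * (V * P)) + ε • (X * P)) * P⁻¹) = X)
      ∧ (δ • ((Vᵀ)⁻¹ * (δ' • (((V * P)ᵀ)⁻¹ * Yᵀ * V) + ε' • (Y * P⁻¹))ᵀ * (V * P))
          + ε • ((δ' • (((V * P)ᵀ)⁻¹ * Yᵀ * V) + ε' • (Y * P⁻¹)) * P) = Y) :=
  fun X Y => ⟨SuhRamchandran.decode_encode hV hP h1 h2 X,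
    SuhRamchandran.encode_decode hV hP h1 h2 Y⟩

/-- With `Q = P⁻¹`, `U = V·P`, `V̂ = (Vᵀ)⁻¹`, `Û = (Uᵀ)⁻¹` and coding
coefficients satisfying `δδ' + εε' = 1` and `εδ' + δε' = 0`, the linear maps
`F(X) = δ V̂ Xᵀ U + ε X P` and `G(Y) = δ' Û Yᵀ V + ε' Y Q` are mutually inverse. -/
theorem suh_ramchandran_encodings_inverse
    {F : Type*} [Field F] {k : ℕ} (hk : 1 ≤ k)
    (V P : Matrix (Fin k) (Fin k) F)
    (hV : IsUnit V.det) (hP : IsUnit P.det)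
    (δ ε δ' ε' : F)
    (h1 : δ * δ' + ε * ε' = 1) (h2 : ε * δ' + δ * ε' = 0) :
    ∀ X Y : Matrix (Fin k) (Fin k) F,
      (δ' • (((V * P)ᵀ)⁻¹ * (δ • ((Vᵀ)⁻¹ * Xᵀ * (V * P)) + ε • (X * P))ᵀ * V)
          + ε' • ((δ • ((Vᵀ)⁻¹ * Xᵀ * (V * P)) + ε • (X * P)) * P⁻¹) = X)
      ∧ (δ • ((Vᵀ)⁻¹ * (δ' • (((V * P)ᵀ)⁻¹ * Yᵀ * V) + ε' • (Y * P⁻¹))ᵀ * (V * P))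
          + ε • ((δ' • (((V * P)ᵀ)⁻¹ * Yᵀ * V) + ε' • (Y * P⁻¹)) * P) = Y) :=
  suh_ramchandran_encodings_inverse_general V P hV hP δ ε δ' ε' h1 h2
end

section
/- Let P be a nonsingular k×k matrix over a field F that is super-regular, i.e., every square submatrix of P is nonsingular. Then the inverse matrix P⁻¹ is also super-regular: every square submatrix of P⁻¹ is nonsingular. -/
/-- A square matrix is super-regular if every square submatrix (selected by injective
choices of rows and columns of equal number) is nonsingular. -/
def SuperRegular {F : Type*} [Field F] {k : ℕ} (M : Matrix (Fin k) (Fin k) F) : Prop :=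
  ∀ (m : ℕ) (r c : Fin m → Fin k), Function.Injective r → Function.Injective c →
    IsUnit (M.submatrix r c).det

/-!
If `P⁻¹` had a singular submatrix on rows `R` and columns `C`, there would be a nonzero `w`
supported on `C` with `P⁻¹ w` vanishing on `R`. Then `u = P⁻¹ w` is supported on `Rᶜ` and
`P u = w` vanishes on `Cᶜ`, i.e. `u` lies in the kernel of the complementary submatrix of `P`
(rows `Cᶜ`, columns `Rᶜ`), which is nonsingular by super-regularity. Hence `u = 0` and `w = 0`.
-/

open Function Matrix

theorem exists_injective_range_eq_compl {α ι : Type*} [Fintype α] [Fintype ι] {r : α → ι}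
    (hr : Injective r) :
    ∃ r' : Fin (Fintype.card ι - Fintype.card α) → ι,
      Injective r' ∧ Set.range r' = (Set.range r)ᶜ := by
  classical
  have hcard : Fintype.card ↥(Set.range r)ᶜ = Fintype.card ι - Fintype.card α := by
    rw [Fintype.card_compl_set, Set.card_range_of_injective hr]
  let e := (Fintype.equivFinOfCardEq hcard).symm
  refine ⟨Subtype.val ∘ e, Subtype.val_injective.comp e.injective, ?_⟩
  rw [e.surjective.range_comp, Subtype.range_coe]

namespace Matrix

variable {m n o R : Type*} [Fintype m] [Fintype o]

theorem mulVec_eq_submatrix_mulVec_comp [NonUnitalNonAssocSemiring R] (M : Matrix n o R)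
    {c : m → o} (hc : Injective c) {w : o → R} (hw : ∀ j ∉ Set.range c, w j = 0) :
    M *ᵥ w = M.submatrix id c *ᵥ (w ∘ c) := by
  funext i
  refine (Fintype.sum_of_injective c hc _ _ (fun j hj => ?_) fun a => rfl).symm
  rw [hw j hj, mul_zero]

theorem isUnit_det_iff_forall_mulVec_eq_zero {K : Type*} [Field K] [DecidableEq m]
    {A : Matrix m m K} :
    IsUnit A.det ↔ ∀ v, A *ᵥ v = 0 → v = 0 := by
  rw [← isUnit_iff_isUnit_det, ← mulVec_injective_iff_isUnit]
  exact injective_iff_map_eq_zero A.mulVecLin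

theorem isUnit_det_submatrix_iff {K : Type*} [Field K] [DecidableEq m] (M : Matrix n o K)
    {r : m → n} {c : m → o} (hc : Injective c) :
    IsUnit (M.submatrix r c).det ↔
      ∀ w : o → K, (∀ j ∉ Set.range c, w j = 0) →
        (∀ i, (M *ᵥ w) (r i) = 0) → w = 0 := by
  have hsub : ∀ w : o → K, (∀ j ∉ Set.range c, w j = 0) →
      ∀ i, (M *ᵥ w) (r i) = (M.submatrix r c *ᵥ (w ∘ c)) i := fun w hw i => by
    rw [M.mulVec_eq_submatrix_mulVec_comp hc hw]
    rfl
  rw [isUnit_det_iff_forall_mulVec_eq_zero]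
  constructor
  · intro hker w hw hMw
    have hwc : w ∘ c = 0 := hker _ (funext fun i => (hsub w hw i).symm.trans (hMw i))
    funext j
    by_cases hj : j ∈ Set.range c
    · obtain ⟨a, rfl⟩ := hj
      exact congrFun hwc a
    · exact hw j hj
  · intro hker v hv
    have hw : ∀ j ∉ Set.range c, extend c v 0 j = 0 := fun j hj => extend_apply' _ _ _ hj
    have hwc : extend c v 0 ∘ c = v := funext (hc.extend_apply v 0)
    have hzero := hker _ hw fun i => by rw [hsub _ hw, hwc, hv, Pi.zero_apply]
    rw [← hwc, hzero]
    rfl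

end Matrix

theorem SuperRegular.isUnit_det {F : Type*} [Field F] {k : ℕ} {P : Matrix (Fin k) (Fin k) F}
    (hsr : SuperRegular P) : IsUnit P.det := by
  simpa using hsr k id id injective_id injective_id

theorem superRegular_inv_general
    {F : Type*} [Field F] {k : ℕ} (P : Matrix (Fin k) (Fin k) F)
    (hsr : SuperRegular P) :
    SuperRegular P⁻¹ := by
  intro m r c hr hc
  obtain ⟨r', hr', hr'_range⟩ := exists_injective_range_eq_compl hr
  obtain ⟨c', hc', hc'_range⟩ := exists_injective_range_eq_compl hc
  have hker := (P.isUnit_det_submatrix_iff hr').1 (hsr _ c' r' hc' hr')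
  refine (P⁻¹.isUnit_det_submatrix_iff hc).2 fun w hw hPw => ?_
  have hPu : P *ᵥ (P⁻¹ *ᵥ w) = w := by
    rw [mulVec_mulVec, P.mul_nonsing_inv hsr.isUnit_det, one_mulVec]
  have hu : P⁻¹ *ᵥ w = 0 := by
    refine hker _ (fun j hj => ?_) fun i => ?_
    · rw [hr'_range, Set.mem_compl_iff, not_not] at hj
      obtain ⟨i, rfl⟩ := hj
      exact hPw i
    · rw [hPu]
      have hi : c' i ∈ (Set.range c)ᶜ := hc'_range ▸ Set.mem_range_self i
      exact hw _ hi
  rw [← hPu, hu, mulVec_zero]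

/-- The inverse of a nonsingular super-regular matrix is super-regular. -/
theorem superRegular_inv
    {F : Type*} [Field F] {k : ℕ} (P : Matrix (Fin k) (Fin k) F)
    (hP : IsUnit P.det) (hsr : SuperRegular P) :
    SuperRegular P⁻¹ :=
  superRegular_inv_general P hsr
end

section
/- Let F be a field and a_1, …, a_k, b_1, …, b_k be 2k pairwise distinct elements of F. Let P be the k×k Cauchy matrix with entries p_{ij} = (a_i − b_j)⁻¹. Then P is invertible and, writing Q = P⁻¹ = [q_{ij}], the (j,i)-entry of Q is given by q_{ji} = (a_i − b_j) · (∏_{ℓ≠i} (b_j − a_ℓ) / ∏_{ℓ≠i} (a_i − a_ℓ)) · (∏_{ℓ≠j} (a_i − b_ℓ) / ∏_{ℓ≠j} (b_j − b_ℓ)), where the products over ℓ≠i (resp. ℓ≠j) range over ℓ ∈ {1,…,k}∖{i} (resp. {1,…,k}∖{j}). -/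
/-!
Write `Lᵢ` and `Mⱼ` for the Lagrange basis polynomials on the nodes `a` and `b`; the claimed
inverse has `(j, i)`-entry `(aᵢ - bⱼ) Lᵢ(bⱼ) Mⱼ(aᵢ)`. Since `(x - aₘ) Lₘ(x) = wₘ N(x)`, with `N` the
nodal polynomial of `a` and `wₘ ≠ 0` its nodal weight, the `(i, m)`-entry of the product with the
Cauchy matrix is `(wₘ / wᵢ) ∑ⱼ Lᵢ(bⱼ) Mⱼ(aₘ)`. As `deg Lᵢ = k - 1 < k`, interpolating `Lᵢ` on the
nodes `b` turns this sum into `Lᵢ(aₘ) = δᵢₘ`.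
-/

open Matrix Finset Polynomial Function

namespace Lagrange

variable {F ι : Type*} [Field F] [DecidableEq ι] {s : Finset ι} {v : ι → F} {i : ι}

theorem eval_basis (s : Finset ι) (v : ι → F) (i : ι) (x : F) :
    (Lagrange.basis s v i).eval x =
      (∏ ℓ ∈ s.erase i, (x - v ℓ)) / ∏ ℓ ∈ s.erase i, (v i - v ℓ) := by
  rw [Lagrange.basis, eval_prod, div_eq_mul_inv, ← prod_inv_distrib, ← prod_mul_distrib]
  refine prod_congr rfl fun ℓ _ => ?_
  simp [basisDivisor, mul_comm]

theorem sub_mul_eval_basis (hi : i ∈ s) (x : F) :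
    (x - v i) * (Lagrange.basis s v i).eval x = nodalWeight s v i * (nodal s v).eval x := by
  rw [basis_eq_prod_sub_inv_mul_nodal_div hi, ← nodal_erase_eq_nodal_div hi, eval_mul, eval_C,
    eval_nodal, eval_nodal, ← mul_prod_erase _ _ hi]
  ring

theorem sum_eval_basis_mul_eval_basis {w : ι → F} (hvs : Set.InjOn v s) (hws : Set.InjOn w s)
    (hi : i ∈ s) (x : F) :
    ∑ j ∈ s, (Lagrange.basis s v i).eval (w j) * (Lagrange.basis s w j).eval x =
      (Lagrange.basis s v i).eval x := by
  have hdeg : (Lagrange.basis s v i).degree < #s := by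
    rw [degree_basis hvs hi]
    exact_mod_cast Nat.sub_lt (card_pos.mpr ⟨i, hi⟩) one_pos
  conv_rhs => rw [eq_interpolate hws hdeg, interpolate_apply, eval_finsetSum]
  simp only [eval_mul, eval_C]

end Lagrange

section CauchyMatrix

open Lagrange

variable {F ι : Type*} [Field F] [Fintype ι] [DecidableEq ι]

def cauchyMatrix (a b : ι → F) : Matrix ι ι F :=
  of fun i j => (a i - b j)⁻¹

noncomputable def cauchyMatrixInv (a b : ι → F) : Matrix ι ι F :=
  of fun j i => (a i - b j) * (Lagrange.basis univ a i).eval (b j) *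
    (Lagrange.basis univ b j).eval (a i)

theorem cauchyMatrix_mul_cauchyMatrixInv {a b : ι → F} (ha : Injective a) (hb : Injective b)
    (hab : ∀ i j, a i ≠ b j) : cauchyMatrix a b * cauchyMatrixInv a b = 1 := by
  ext i m
  have hw : ∀ i, nodalWeight univ a i ≠ 0 := fun i => nodalWeight_ne_zero ha.injOn (mem_univ i)
  have hterm : ∀ j, cauchyMatrix a b i j * cauchyMatrixInv a b j m =
      nodalWeight univ a m / nodalWeight univ a i *
        ((Lagrange.basis univ a i).eval (b j) * (Lagrange.basis univ b j).eval (a m)) := by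
    intro j
    have hm := sub_mul_eval_basis (v := a) (mem_univ m) (b j)
    have hi := sub_mul_eval_basis (v := a) (mem_univ i) (b j)
    simp only [cauchyMatrix, cauchyMatrixInv, of_apply]
    field_simp [hw i, sub_ne_zero.mpr (hab i j)]
    linear_combination (Lagrange.basis univ b j).eval (a m) *
      (nodalWeight univ a m * hi - nodalWeight univ a i * hm)
  rw [mul_apply, sum_congr rfl fun j _ => hterm j, ← mul_sum,
    sum_eval_basis_mul_eval_basis ha.injOn hb.injOn (mem_univ i)]
  rcases eq_or_ne i m with rfl | him
  · rw [div_self (hw i), eval_basis_self ha.injOn (mem_univ i), one_apply_eq, one_mul]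
  · rw [eval_basis_of_ne him (mem_univ m), one_apply_ne him, mul_zero]

end CauchyMatrix

/-- Entries of the inverse of a Cauchy matrix. -/
theorem cauchy_matrix_inverse_entries
    {F : Type*} [Field F] {k : ℕ} (a b : Fin k → F)
    (hdist : Function.Injective (Sum.elim a b : Fin k ⊕ Fin k → F)) :
    IsUnit (Matrix.of fun i j => (a i - b j)⁻¹ : Matrix (Fin k) (Fin k) F).det ∧
    ∀ i j : Fin k,
      (Matrix.of fun i j => (a i - b j)⁻¹ : Matrix (Fin k) (Fin k) F)⁻¹ j i =
        (a i - b j) *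
          ((∏ ℓ ∈ univ.erase i, (b j - a ℓ)) / (∏ ℓ ∈ univ.erase i, (a i - a ℓ))) *
          ((∏ ℓ ∈ univ.erase j, (a i - b ℓ)) / (∏ ℓ ∈ univ.erase j, (b j - b ℓ))) := by
  have ha : Injective a := hdist.comp Sum.inl_injective
  have hb : Injective b := hdist.comp Sum.inr_injective
  have hab : ∀ i j, a i ≠ b j := fun i j h => Sum.inl_ne_inr (hdist h)
  have hinv := cauchyMatrix_mul_cauchyMatrixInv ha hb hab
  refine ⟨isUnit_det_of_right_inverse hinv, fun i j => ?_⟩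
  rw [show (of fun i j => (a i - b j)⁻¹ : Matrix (Fin k) (Fin k) F) = cauchyMatrix a b from rfl,
    inv_eq_right_inv hinv, cauchyMatrixInv, of_apply, Lagrange.eval_basis, Lagrange.eval_basis]
end

section
/- Let F be a field, k ≥ 2, V a nonsingular k×k matrix over F, P a super-regular k×k matrix over F, Q = P⁻¹ = [q_{ij}], U = V·P with columns u_1, …, u_k, and let v_1, …, v_k be the columns of V. Let δ, ε ∈ F be nonzero with δ² ≠ ε², and fix a, b ∈ {1,…,k} with p_{ab}·q_{ba} ≠ 1. Then the k×k matrix whose first row is (ε − (ε + δ)p_{ab}q_{ba})·u_bᵗ + δ p_{ab}·v_aᵗ and whose remaining k−1 rows are δ·u_jᵗ + ε p_{aj}·v_aᵗ for j ∈ {1,…,k}∖{b} is nonsingular. -/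
open Matrix Finset

/-- `enum b` enumerates `Fin k` so that position `0` is `b` and positions `1,…,k−1`
list the elements of `{1,…,k}∖{b}` in increasing order. -/
def enum {k : ℕ} (b : Fin k) (i : Fin k) : Fin k :=
  if (i : ℕ) = 0 then b
  else if (i : ℕ) ≤ (b : ℕ) then ⟨(i : ℕ) - 1, lt_of_le_of_lt (Nat.sub_le _ _) i.isLt⟩
  else i

/-!
Write `U = V * R`, where `R` is `P` with its columns reordered so that `u_b` comes first.
Since `v_a = ∑_c q_{ca} u_c`, every row of the repair matrix is a combination of the `u_c`,
and its coefficient matrix is `δ • 1` plus a rank-two matrix. By Sylvester's identity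
`det (1 + X Y) = det (1 + Y X)` its determinant reduces to a `2 × 2` one, which equals
`δ ^ (k - 2) * ε * (ε + δ) * (1 - p_{ab} q_{ba}) ^ 2` and is nonzero.
-/

lemma enum_bijective {k : ℕ} (b : Fin k) : Function.Bijective (enum b) := by
  rw [Fintype.bijective_iff_surjective_and_card]
  refine ⟨fun y => ?_, rfl⟩
  rcases lt_trichotomy (y : ℕ) (b : ℕ) with h | h | h
  · refine ⟨⟨(y : ℕ) + 1, by omega⟩, ?_⟩
    simp only [enum]
    rw [if_neg (by omega), if_pos (by omega)]
    exact Fin.ext (by simp)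
  · refine ⟨⟨0, by omega⟩, ?_⟩
    simpa [enum] using (Fin.ext h).symm
  · refine ⟨y, ?_⟩
    simp only [enum]
    rw [if_neg (by omega), if_neg (by omega)]

section

variable {F : Type*} [Field F] {ι : Type*} [Fintype ι] [DecidableEq ι]

theorem det_smul_one_add_vecMulVec_add_vecMulVec {δ : F} (hδ : δ ≠ 0) (u₁ u₂ w₁ w₂ : ι → F) :
    δ ^ 2 * (δ • (1 : Matrix ι ι F) + vecMulVec u₁ w₁ + vecMulVec u₂ w₂).det =
      δ ^ Fintype.card ι *
        ((δ + w₁ ⬝ᵥ u₁) * (δ + w₂ ⬝ᵥ u₂) - (w₁ ⬝ᵥ u₂) * (w₂ ⬝ᵥ u₁)) := by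
  set C : Matrix ι (Fin 2) F := of fun i => ![u₁ i, u₂ i]
  set E : Matrix (Fin 2) ι F := of ![w₁, w₂]
  have hCE : vecMulVec u₁ w₁ + vecMulVec u₂ w₂ = C * E := by
    ext i j; simp [C, E, mul_apply, Fin.sum_univ_two, vecMulVec_apply]
  have hEC : δ • (1 : Matrix (Fin 2) (Fin 2) F) + E * C =
      !![δ + w₁ ⬝ᵥ u₁, w₁ ⬝ᵥ u₂; w₂ ⬝ᵥ u₁, δ + w₂ ⬝ᵥ u₂] := by
    ext i j; fin_cases i <;> fin_cases j <;> simp [C, E, vecMul, dotProduct, mul_comm]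
  calc δ ^ 2 * (δ • (1 : Matrix ι ι F) + vecMulVec u₁ w₁ + vecMulVec u₂ w₂).det
      = δ ^ 2 * (δ • (1 + (δ⁻¹ • C) * E)).det := by
        rw [smul_add, Matrix.smul_mul, smul_smul, mul_inv_cancel₀ hδ, one_smul,
          add_assoc, hCE]
    _ = δ ^ Fintype.card ι * (δ • (1 + E * (δ⁻¹ • C))).det := by
        rw [det_smul, det_smul, det_one_add_mul_comm, Fintype.card_fin]; ring
    _ = δ ^ Fintype.card ι * (δ • (1 : Matrix (Fin 2) (Fin 2) F) + E * C).det := by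
        rw [Matrix.mul_smul, smul_add, smul_smul, mul_inv_cancel₀ hδ, one_smul]
    _ = _ := by rw [hEC, det_fin_two_of]


/-- The paper's repair matrix after reordering the columns of `P` into `R`, so that the
distinguished row `i₀` corresponds to `b`. -/
noncomputable def repairMatrix (V R : Matrix ι ι F) (δ ε : F) (a i₀ : ι) : Matrix ι ι F :=
  of fun i l =>
    if i = i₀ then (ε - (ε + δ) * R a i₀ * R⁻¹ i₀ a) * (V * R) l i₀ + δ * R a i₀ * V l a
    else δ * (V * R) l i + ε * R a i * V l a

/-- The rows of `repairMatrix V R δ ε a i₀` in coordinates with respect to the columns of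
`V * R`: since `V = (V * R) * R⁻¹`, the column `a` of `V` has coordinates `fun c => R⁻¹ c a`. -/
noncomputable def repairCoeff (R : Matrix ι ι F) (δ ε : F) (a i₀ : ι) : Matrix ι ι F :=
  δ • 1 + vecMulVec (Pi.single i₀ (ε - (ε + δ) * R a i₀ * R⁻¹ i₀ a - δ)) (Pi.single i₀ 1)
    + vecMulVec (fun i => (if i = i₀ then δ else ε) * R a i) (fun c => R⁻¹ c a)

theorem repairMatrix_eq_repairCoeff_mul (V : Matrix ι ι F) {R : Matrix ι ι F} (hR : IsUnit R.det)
    (δ ε : F) (a i₀ : ι) :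
    repairMatrix V R δ ε a i₀ = repairCoeff R δ ε a i₀ * (V * R)ᵀ := by
  have hVa : (V * R) *ᵥ (fun c => R⁻¹ c a) = fun l => V l a := funext fun l => by
    simpa [mulVec, dotProduct, mul_apply] using congrFun₂ (mul_nonsing_inv_cancel_right R V hR) l a
  rw [repairCoeff, Matrix.add_mul, Matrix.add_mul, Matrix.smul_mul, Matrix.one_mul, vecMulVec_mul,
    vecMulVec_mul, vecMul_transpose, vecMul_transpose, mulVec_single_one, hVa]
  ext i l
  by_cases hi : i = i₀ <;> simp [hi, repairMatrix, vecMulVec_apply, -transpose_mul]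
  ring

theorem det_repairCoeff {R : Matrix ι ι F} (hR : IsUnit R.det) {δ : F} (hδ : δ ≠ 0) (ε : F)
    (a i₀ : ι) :
    δ ^ 2 * (repairCoeff R δ ε a i₀).det =
      δ ^ Fintype.card ι * (ε * (ε + δ) * (1 - R a i₀ * R⁻¹ i₀ a) ^ 2) := by
  have hRa : ∑ c, R a c * R⁻¹ c a = 1 := by
    simpa [mul_apply] using congrFun₂ (mul_nonsing_inv R hR) a a
  have hw : (fun c => R⁻¹ c a) ⬝ᵥ (fun i => (if i = i₀ then δ else ε) * R a i) =
      ε + (δ - ε) * (R a i₀ * R⁻¹ i₀ a) :=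
    calc ∑ c, R⁻¹ c a * ((if c = i₀ then δ else ε) * R a c)
        = ∑ c, (ε * (R a c * R⁻¹ c a) + (δ - ε) * (if c = i₀ then R a c * R⁻¹ c a else 0)) :=
          sum_congr rfl fun c _ => by split_ifs <;> ring
      _ = _ := by rw [sum_add_distrib, ← mul_sum, ← mul_sum, hRa, sum_ite_eq' univ i₀]; simp
  rw [repairCoeff, det_smul_one_add_vecMulVec_add_vecMulVec hδ, single_dotProduct,
    single_dotProduct, dotProduct_single, hw]
  simp only [Pi.single_eq_same, if_true, one_mul]
  ring

theorem isUnit_det_repairMatrix {V R : Matrix ι ι F} (hV : IsUnit V.det) (hR : IsUnit R.det)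
    {δ ε : F} (hδ : δ ≠ 0) (hε : ε ≠ 0) (hsq : δ ^ 2 ≠ ε ^ 2) {a i₀ : ι}
    (hs : R a i₀ * R⁻¹ i₀ a ≠ 1) :
    IsUnit (repairMatrix V R δ ε a i₀).det := by
  have hεδ : ε + δ ≠ 0 := fun h => hsq (by linear_combination (δ - ε) * h)
  have hK : δ ^ 2 * (repairCoeff R δ ε a i₀).det ≠ 0 := by
    rw [det_repairCoeff hR hδ]
    exact mul_ne_zero (pow_ne_zero _ hδ)
      (mul_ne_zero (mul_ne_zero hε hεδ) (pow_ne_zero _ (sub_ne_zero.mpr hs.symm)))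
  rw [repairMatrix_eq_repairCoeff_mul V hR, det_mul, det_transpose, det_mul]
  exact (isUnit_iff_ne_zero.mpr (right_ne_zero_of_mul hK)).mul (hV.mul hR)

end

/-- (Proposition 1) The repair matrix whose first row is
`(ε − (ε + δ)p_{ab}q_{ba})u_bᵗ + δ p_{ab} v_aᵗ` and whose remaining rows are
`δ u_jᵗ + ε p_{aj} v_aᵗ` for `j ∈ {1,…,k}∖{b}` is nonsingular. -/
theorem repair_matrix_nonsingular
    {F : Type*} [Field F] {k : ℕ} (hk : 2 ≤ k)
    (V P : Matrix (Fin k) (Fin k) F)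
    (hV : IsUnit V.det) (hP : SuperRegular P)
    (δ ε : F) (hδ : δ ≠ 0) (hε : ε ≠ 0) (hsq : δ ^ 2 ≠ ε ^ 2)
    (a b : Fin k) (hab : P a b * P⁻¹ b a ≠ 1) :
    IsUnit (Matrix.of fun i l =>
      if (i : ℕ) = 0 then
        (ε - (ε + δ) * P a b * P⁻¹ b a) * (V * P) l b + δ * P a b * V l a
      else
        δ * (V * P) l (enum b i) + ε * P a (enum b i) * V l a
      : Matrix (Fin k) (Fin k) F).det := by
  have : NeZero k := ⟨by omega⟩
  set σ := Equiv.ofBijective (enum b) (enum_bijective b)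
  have hσ : ∀ i, σ i = enum b i := fun _ => rfl
  have hσ0 : σ 0 = b := by simp [hσ, enum]
  have hR : IsUnit (P.submatrix id σ).det := hP k id σ Function.injective_id σ.injective
  have hinv : (P.submatrix id σ)⁻¹ = P⁻¹.submatrix σ id := inv_submatrix_equiv P (Equiv.refl _) σ
  have hU : V * P.submatrix id σ = (V * P).submatrix id σ := by ext; simp [mul_apply]
  convert isUnit_det_repairMatrix hV hR hδ hε hsq (a := a) (i₀ := 0) ?_ using 2
  · ext i l
    by_cases hi : i = 0 <;> simp [hi, repairMatrix, hinv, hσ0, hU, hσ]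
  · simpa [hinv, hσ0] using hab
end

section
/- Let F be a field, k ≥ 2, and let p = (p_1,…,p_k) and r = (r_1,…,r_k) be vectors in F^k with ∑_{ℓ=1}^k p_ℓ r_ℓ = 1. Fix an index b ∈ {1,…,k} and δ, ε ∈ F. Let A be the k×k diagonal matrix whose first diagonal entry is ε − (ε + δ)p_b r_b and whose other k−1 diagonal entries are δ; let g be the column vector with first entry δ p_b and remaining entries ε p_ℓ for ℓ ∈ {1,…,k}∖{b}; let h be the column vector with first entry r_b and remaining entries r_ℓ for ℓ ∈ {1,…,k}∖{b}. Then det(A + g hᵗ) = ε (ε + δ) δ^{k−2} (1 − p_b r_b)². In particular, if ε ≠ 0, δ ≠ 0, ε + δ ≠ 0 and p_b r_b ≠ 1, then A + g hᵗ is nonsingular. -/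
/-
Add the rank-one term `u vᵀ` to `A` one column at a time. Adding `vⱼ u` to column `j` raises the
determinant by `vⱼ det (A with column j replaced by u)`: the columns updated earlier differ from
those of this matrix by multiples of its column `j = u`, which does not change the determinant.
Hence `det (A + u vᵀ) = det A + v ⬝ adj(A) u` with no invertibility of `A`, which for
`A = diagonal d` reads `∏ dᵢ + ∑ᵢ uᵢ vᵢ ∏_{j ≠ i} dⱼ`. Since `enum b` is a permutation with
`enum b 0 = b`, the entries after the first contribute `∑_{ℓ ≠ b} p_ℓ r_ℓ = 1 - s` with
`s = p_b r_b`, and the determinant becomes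
`ε (1 - s) δ^{k-1} + ε (ε - (ε + δ) s) (1 - s) δ^{k-2} = ε (ε + δ) δ^{k-2} (1 - s)²`.
-/

open Matrix Finset

namespace Matrix

variable {n R : Type*} [Fintype n] [DecidableEq n] [CommRing R]

theorem det_add_vecMulVec_mulVec (A : Matrix n n R) (x w : n → R) :
    (A + vecMulVec (A *ᵥ x) w).det = A.det * (1 + w ⬝ᵥ x) := by
  have hfactor : A + vecMulVec (A *ᵥ x) w = A * (1 + vecMulVec x w) := by
    rw [Matrix.mul_add, Matrix.mul_one, mul_vecMulVec]
  rw [hfactor, det_mul, vecMulVec_eq Unit, det_one_add_replicateCol_mul_replicateRow]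

theorem det_add_vecMulVec_update (A : Matrix n n R) (u w : n → R) {j : n} (hw : w j = 0)
    (c : R) :
    (A + vecMulVec u (Function.update w j c)).det =
      (A + vecMulVec u w).det + c * (A.updateCol j u).det := by
  have hcol : A + vecMulVec u (Function.update w j c) =
      (A + vecMulVec u w).updateCol j ((fun i => (A + vecMulVec u w) i j) + c • u) := by
    ext i l
    by_cases hl : l = j
    · subst hl; simp [vecMulVec_apply, hw, mul_comm]
    · simp [vecMulVec_apply, hl]
  have hreplace : (A + vecMulVec u w).updateCol j u =
      A.updateCol j u + vecMulVec (A.updateCol j u *ᵥ Pi.single j 1) w := by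
    ext i l
    by_cases hl : l = j
    · subst hl; simp [vecMulVec_apply, hw]
    · simp [vecMulVec_apply, hl]
  rw [hcol, det_updateCol_add, updateCol_eq_self, det_updateCol_smul, hreplace,
    det_add_vecMulVec_mulVec, dotProduct_single, hw]
  ring

theorem det_add_vecMulVec (A : Matrix n n R) (u v : n → R) :
    (A + vecMulVec u v).det = A.det + v ⬝ᵥ (adjugate A *ᵥ u) := by
  suffices ∀ s : Finset n, (A + vecMulVec u (fun j => if j ∈ s then v j else 0)).det =
      A.det + ∑ i ∈ s, v i * cramer A u i by
    simpa [dotProduct, cramer_eq_adjugate_mulVec] using this univ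
  intro s
  induction s using Finset.induction_on with
  | empty => simp [← Pi.zero_def]
  | insert j s hj ih =>
    have hupdate : (fun i => if i ∈ insert j s then v i else 0) =
        Function.update (fun i => if i ∈ s then v i else 0) j (v j) := by
      ext i
      by_cases hi : i = j
      · subst hi; simp
      · simp [hi]
    rw [hupdate, det_add_vecMulVec_update _ _ _ (by simp [hj]), ih, sum_insert hj,
      cramer_apply]
    ring

theorem det_diagonal_add_vecMulVec (d u v : n → R) :
    (diagonal d + vecMulVec u v).det =
      ∏ i, d i + ∑ i, u i * v i * ∏ j ∈ univ.erase i, d j := by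
  rw [det_add_vecMulVec, adjugate_diagonal, det_diagonal]
  simp only [dotProduct, mulVec_diagonal]
  congr 1
  exact sum_congr rfl fun i _ => by ring

theorem det_diagonal_cons_add_vecMulVec {m : ℕ} (a δ : R) (u v : Fin (m + 2) → R) :
    (diagonal (Fin.cons a fun _ => δ) + vecMulVec u v).det =
      (a + u 0 * v 0) * δ ^ (m + 1) + a * δ ^ m * ∑ i : Fin (m + 1), u i.succ * v i.succ := by
  set d : Fin (m + 2) → R := Fin.cons a fun _ => δ
  have hd_ne {j : Fin (m + 2)} (hj : j ≠ 0) : d j = δ := by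
    obtain ⟨j, rfl⟩ := Fin.exists_succ_eq.2 hj
    rfl
  have hprod_erase_zero : ∏ j ∈ univ.erase 0, d j = δ ^ (m + 1) := by
    rw [prod_eq_pow_card fun j hj => hd_ne (ne_of_mem_erase hj)]
    simp [card_erase_of_mem]
  have hprod_erase_succ (i : Fin (m + 1)) : ∏ j ∈ univ.erase i.succ, d j = a * δ ^ m := by
    have h0 : (0 : Fin (m + 2)) ∈ univ.erase i.succ :=
      mem_erase.2 ⟨(Fin.succ_ne_zero i).symm, mem_univ 0⟩
    rw [← mul_prod_erase _ d h0, prod_eq_pow_card fun j hj => hd_ne (ne_of_mem_erase hj),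
      card_erase_of_mem h0, card_erase_of_mem (mem_univ _)]
    simp [d]
  have hprod : ∏ j, d j = a * δ ^ (m + 1) := by simp [d, Fin.prod_univ_succ]
  rw [det_diagonal_add_vecMulVec, hprod, Fin.sum_univ_succ, hprod_erase_zero, mul_sum]
  simp only [hprod_erase_succ, mul_comm (a * δ ^ m)]
  ring

end Matrix

theorem enum_injective {k : ℕ} (b : Fin k) : Function.Injective (enum b) := by
  intro i j h
  simp only [enum] at h
  split_ifs at h <;> simp only [Fin.ext_iff] at h ⊢ <;> omega

theorem add_sum_enum_succ {M : Type*} [AddCommMonoid M] {m : ℕ} (b : Fin (m + 1))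
    (f : Fin (m + 1) → M) :
    f b + ∑ i : Fin m, f (enum b i.succ) = ∑ j, f j := by
  have hb : enum b 0 = b := by simp [enum]
  rw [← (Equiv.ofBijective _ (enum_injective b).bijective_of_finite).sum_comp, Fin.sum_univ_succ]
  simp [hb]

/-- (Sherman–Morrison computation in Proposition 1) With
`∑ p_ℓ r_ℓ = 1`, `A = diag(ε − (ε + δ)p_b r_b, δ, …, δ)`, `g = (δ p_b, ε p_ℓ (ℓ ≠ b))ᵗ`
and `h = (r_b, r_ℓ (ℓ ≠ b))ᵗ`, we have `det(A + g hᵗ) = ε(ε + δ)δ^{k−2}(1 − p_b r_b)²`;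
in particular `A + g hᵗ` is nonsingular when `ε, δ, ε + δ ≠ 0` and `p_b r_b ≠ 1`. -/
theorem repair_first_factor_det
    {F : Type*} [Field F] {k : ℕ} (hk : 2 ≤ k)
    (p r : Fin k → F) (hpr : ∑ ℓ, p ℓ * r ℓ = 1)
    (b : Fin k) (δ ε : F) :
    (Matrix.diagonal (fun i : Fin k =>
        if (i : ℕ) = 0 then ε - (ε + δ) * p b * r b else δ) +
      Matrix.vecMulVec
        (fun i : Fin k => if (i : ℕ) = 0 then δ * p b else ε * p (enum b i))
        (fun i : Fin k => if (i : ℕ) = 0 then r b else r (enum b i))).det =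
      ε * (ε + δ) * δ ^ (k - 2) * (1 - p b * r b) ^ 2 ∧
    (ε ≠ 0 → δ ≠ 0 → ε + δ ≠ 0 → p b * r b ≠ 1 →
      IsUnit (Matrix.diagonal (fun i : Fin k =>
          if (i : ℕ) = 0 then ε - (ε + δ) * p b * r b else δ) +
        Matrix.vecMulVec
          (fun i : Fin k => if (i : ℕ) = 0 then δ * p b else ε * p (enum b i))
          (fun i : Fin k => if (i : ℕ) = 0 then r b else r (enum b i))).det) := by
  obtain ⟨m, rfl⟩ : ∃ m, k = m + 2 := ⟨k - 2, by omega⟩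
  have hdiag : (fun i : Fin (m + 2) => if (i : ℕ) = 0 then ε - (ε + δ) * p b * r b else δ) =
      Fin.cons (ε - (ε + δ) * p b * r b) fun _ => δ := by
    ext i
    cases i using Fin.cases <;> simp
  have hrest : ∑ i : Fin (m + 1), ε * p (enum b i.succ) * r (enum b i.succ) =
      ε * (1 - p b * r b) := by
    rw [← hpr, ← add_sum_enum_succ b, add_sub_cancel_left, mul_sum]
    simp only [mul_assoc]
  rw [hdiag, det_diagonal_cons_add_vecMulVec]
  simp only [Fin.val_zero, Fin.val_succ, Nat.add_one_ne_zero, if_true, if_false, hrest,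
    Nat.add_sub_cancel]
  have hformula : (ε - (ε + δ) * p b * r b + δ * p b * r b) * δ ^ (m + 1) +
      (ε - (ε + δ) * p b * r b) * δ ^ m * (ε * (1 - p b * r b)) =
      ε * (ε + δ) * δ ^ m * (1 - p b * r b) ^ 2 := by
    ring
  refine ⟨hformula, fun hε hδ hεδ hs => ?_⟩
  have h1 : 1 - p b * r b ≠ 0 := sub_ne_zero.2 hs.symm
  rw [hformula, isUnit_iff_ne_zero]
  positivity
end

section
/- Let F be a field, V a nonsingular k×k matrix over F with columns v_1,…,v_k, P a nonsingular k×k matrix over F with entries p_{ij}, Q = P⁻¹ = [q_{ij}], U = V·P with columns u_1,…,u_k, and V̂ = (Vᵗ)⁻¹. Let X be any k×k matrix over F with columns x_1,…,x_k, let δ, ε ∈ F, set Y = δ V̂ Xᵗ U + ε X P with columns y_1,…,y_k, and let z_j = ∑_{ℓ=1}^k p_{ℓj} x_ℓ. Then for any a, b ∈ {1,…,k}: ∑_{j ∈ {1,…,k}∖{b}} q_{ja} (u_bᵗ y_j) + (δ + ε) q_{ba} ∑_{i ∈ {1,…,k}∖{a}} p_{ib} (u_bᵗ x_i) = δ (v_aᵗ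 z_b) + (ε − (ε + δ) p_{ab} q_{ba}) (u_bᵗ x_a). -/
open Matrix Finset

/-!
With `U = V P`, `Z = X P` and `Q = P⁻¹`, the parity symbols seen by newcomer `k + b` are the
entries of `Uᵀ Y = δ (Uᵀ Z)ᵀ + ε Uᵀ Z`, because `Vᵀ V̂ = 1`. Hence the full sum
`∑_j q_{ja} (u_bᵗ y_j)` is the entry `(Uᵀ Y Q)_{ba} = δ (v_aᵗ z_b) + ε (u_bᵗ x_a)`, and the missing
`j = b` term `q_{ba} (δ + ε) (u_bᵗ z_b)` is exactly what the second sum supplies, up to its own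
missing `i = a` term `p_{ab} (u_bᵗ x_a)`.
-/

theorem dotProduct_col_col {m n p R : Type*} [Fintype m] [Mul R] [AddCommMonoid R]
    (M : Matrix m n R) (N : Matrix m p R) (i : n) (j : p) :
    (fun l => M l i) ⬝ᵥ (fun l => N l j) = (Mᵀ * N) i j :=
  rfl

theorem col_mul_eq_sum {m n p R : Type*} [Fintype n] [CommSemiring R]
    (X : Matrix m n R) (P : Matrix n p R) (j : p) :
    (fun i => ∑ l, P l j * X i l) = fun i => (X * P) i j := by
  ext i
  simp only [mul_apply, mul_comm]

section

variable {n R : Type*} [Fintype n] [DecidableEq n] [CommRing R]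

noncomputable def parityMatrix (V P X : Matrix n n R) (δ ε : R) : Matrix n n R :=
  δ • ((Vᵀ)⁻¹ * Xᵀ * (V * P)) + ε • (X * P)

variable {V : Matrix n n R} (P X : Matrix n n R) (δ ε : R)

theorem transpose_mul_parityMatrix (hV : IsUnit V.det) :
    (V * P)ᵀ * parityMatrix V P X δ ε =
      δ • ((V * P)ᵀ * (X * P))ᵀ + ε • ((V * P)ᵀ * (X * P)) := by
  have hVt : Vᵀ * (Vᵀ)⁻¹ = 1 := mul_nonsing_inv _ (by rwa [det_transpose])
  simp only [parityMatrix, Matrix.mul_add, Matrix.mul_smul, transpose_mul, transpose_transpose,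
    Matrix.mul_assoc]
  rw [← Matrix.mul_assoc Vᵀ, hVt, Matrix.one_mul]

theorem transpose_mul_parityMatrix_mul_inv (hV : IsUnit V.det) (hP : IsUnit P.det) :
    (V * P)ᵀ * parityMatrix V P X δ ε * P⁻¹ =
      δ • (Vᵀ * (X * P))ᵀ + ε • ((V * P)ᵀ * X) := by
  have hPQ : P * P⁻¹ = 1 := mul_nonsing_inv P hP
  rw [transpose_mul_parityMatrix P X δ ε hV]
  simp only [Matrix.add_mul, Matrix.smul_mul, transpose_mul, transpose_transpose, Matrix.mul_assoc,
    hPQ, Matrix.mul_one]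

end

/-- The exchanged packet sent from newcomer `k+b` to newcomer `a`:
`∑_{j≠b} q_{ja}(u_bᵗ y_j) + (δ+ε) q_{ba} ∑_{i≠a} p_{ib}(u_bᵗ x_i)
  = δ (v_aᵗ z_b) + (ε − (ε+δ)p_{ab}q_{ba})(u_bᵗ x_a)`. -/
theorem exchanged_packet_identity
    {F : Type*} [Field F] {k : ℕ}
    (V P : Matrix (Fin k) (Fin k) F)
    (hV : IsUnit V.det) (hP : IsUnit P.det)
    (X : Matrix (Fin k) (Fin k) F) (δ ε : F) (a b : Fin k) :
    (∑ j ∈ univ.erase b, P⁻¹ j a *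
        ((fun idx => (V * P) idx b) ⬝ᵥ
          (fun idx => (δ • ((Vᵀ)⁻¹ * Xᵀ * (V * P)) + ε • (X * P)) idx j))) +
      (δ + ε) * P⁻¹ b a *
        (∑ i ∈ univ.erase a, P i b *
          ((fun idx => (V * P) idx b) ⬝ᵥ (fun idx => X idx i))) =
    δ * ((fun idx => V idx a) ⬝ᵥ (fun idx => ∑ ℓ, P ℓ b * X idx ℓ)) +
      (ε - (ε + δ) * P a b * P⁻¹ b a) *
        ((fun idx => (V * P) idx b) ⬝ᵥ (fun idx => X idx a)) := by
  set UY := (V * P)ᵀ * parityMatrix V P X δ ε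
  have hUY : ∑ j, P⁻¹ j a * UY b j = δ * (Vᵀ * (X * P)) a b + ε * ((V * P)ᵀ * X) b a := by
    simp_rw [mul_comm (P⁻¹ _ a), ← mul_apply, UY,
      transpose_mul_parityMatrix_mul_inv P X δ ε hV hP, Matrix.add_apply, Matrix.smul_apply,
      transpose_apply, smul_eq_mul]
  have hUY_diag : UY b b = (δ + ε) * ((V * P)ᵀ * (X * P)) b b := by
    simp only [UY, transpose_mul_parityMatrix P X δ ε hV, Matrix.add_apply, Matrix.smul_apply,
      transpose_apply, smul_eq_mul, add_mul]
  have hUZ : ∑ i, P i b * ((V * P)ᵀ * X) b i = ((V * P)ᵀ * (X * P)) b b := by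
    simp_rw [mul_comm (P _ b), ← mul_apply, Matrix.mul_assoc]
  simp only [dotProduct_col_col, col_mul_eq_sum]
  change ∑ j ∈ univ.erase b, P⁻¹ j a * UY b j + _ = _
  rw [sum_erase_eq_sub (mem_univ b), sum_erase_eq_sub (mem_univ a), hUY, hUY_diag, hUZ]
  ring
end

section
/- Let F be a field, V a nonsingular k×k matrix over F with columns v_1,…,v_k, P a nonsingular k×k matrix over F with entries p_{ij}, U = V·P with columns u_1,…,u_k, and V̂ = (Vᵗ)⁻¹. Let X be any k×k matrix over F with columns x_1,…,x_k, let δ, ε ∈ F, and set Y = δ V̂ Xᵗ U + ε X P with columns y_1,…,y_k. Then for any a, j ∈ {1,…,k}: v_aᵗ y_j − ε ∑_{i ∈ {1,…,k}∖{a}} p_{ij} (v_aᵗ x_i) = (δ u_j + ε p_{aj} v_a)ᵗ x_a. -/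
/-!
Multiplying `Y = δ (Vᵀ)⁻¹ Xᵀ U + ε X P` on the left by `Vᵀ` cancels `(Vᵀ)⁻¹`, so
`v_aᵗ y_j = δ x_aᵗ u_j + ε ∑_i p_{ij} v_aᵗ x_i`. The only term of the last sum that involves the
unknown column `x_a` is `i = a`; subtracting the others leaves `(δ u_j + ε p_{aj} v_a)ᵗ x_a`.
-/

open Matrix Finset

section

variable {n o R : Type*} [Fintype n] [CommRing R]

theorem Matrix.dotProduct_col_transpose_inv_mul [DecidableEq n] {V : Matrix n n R}
    (hV : IsUnit V.det) (M : Matrix n o R) (a : n) (j : o) :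
    ((fun i => V i a) ⬝ᵥ fun i => ((Vᵀ)⁻¹ * M) i j) = M a j := by
  change (Vᵀ * ((Vᵀ)⁻¹ * M)) a j = _
  rw [mul_nonsing_inv_cancel_left _ _ (by rwa [det_transpose])]

theorem Matrix.dotProduct_col_mul [Fintype o] (v : n → R) (X : Matrix n o R) (P : Matrix o o R)
    (j : o) :
    (v ⬝ᵥ fun i => (X * P) i j) = ∑ i, P i j * (v ⬝ᵥ fun l => X l i) := by
  change v ⬝ᵥ X *ᵥ (fun i => P i j) = _
  rw [dotProduct_mulVec, dotProduct_comm]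
  rfl

end

theorem newcomer_computed_scalar_identity_general
    {F : Type*} [Field F] {k : ℕ}
    (V P : Matrix (Fin k) (Fin k) F)
    (hV : IsUnit V.det)
    (X : Matrix (Fin k) (Fin k) F) (δ ε : F) :
    ∀ a j : Fin k,
      ((fun idx => V idx a) ⬝ᵥ
          (fun idx => (δ • ((Vᵀ)⁻¹ * Xᵀ * (V * P)) + ε • (X * P)) idx j)) -
        ε * (∑ i ∈ univ.erase a, P i j *
          ((fun idx => V idx a) ⬝ᵥ (fun idx => X idx i))) =
      (fun idx => δ * (V * P) idx j + ε * P a j * V idx a) ⬝ᵥ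
        (fun idx => X idx a) := by
  intro a j
  set v : Fin k → F := fun idx => V idx a
  have hY : (v ⬝ᵥ fun idx => (δ • ((Vᵀ)⁻¹ * Xᵀ * (V * P)) + ε • (X * P)) idx j) =
      δ * (Xᵀ * (V * P)) a j + ε * ∑ i, P i j * (v ⬝ᵥ fun idx => X idx i) := by
    change (v ⬝ᵥ (δ • (fun idx => ((Vᵀ)⁻¹ * Xᵀ * (V * P)) idx j) +
      ε • fun idx => (X * P) idx j)) = _
    rw [dotProduct_add, dotProduct_smul, dotProduct_smul, Matrix.mul_assoc,
      dotProduct_col_transpose_inv_mul hV, dotProduct_col_mul]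
    rfl
  have hRHS : (fun idx => δ * (V * P) idx j + ε * P a j * V idx a) ⬝ᵥ (fun idx => X idx a) =
      δ * (Xᵀ * (V * P)) a j + ε * P a j * (v ⬝ᵥ fun idx => X idx a) := by
    change (δ • (fun idx => (V * P) idx j) + (ε * P a j) • v) ⬝ᵥ _ = _
    rw [add_dotProduct, smul_dotProduct, smul_dotProduct, dotProduct_comm, smul_eq_mul,
      smul_eq_mul, mul_assoc]
    rfl
  rw [hY, hRHS, ← add_sum_erase _ _ (mem_univ a)]
  ring

/-- For all `a, j`:
`v_aᵗ y_j − ε ∑_{i≠a} p_{ij}(v_aᵗ x_i) = (δ u_j + ε p_{aj} v_a)ᵗ x_a`. -/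
theorem newcomer_computed_scalar_identity
    {F : Type*} [Field F] {k : ℕ}
    (V P : Matrix (Fin k) (Fin k) F)
    (hV : IsUnit V.det) (hP : IsUnit P.det)
    (X : Matrix (Fin k) (Fin k) F) (δ ε : F) :
    ∀ a j : Fin k,
      ((fun idx => V idx a) ⬝ᵥ
          (fun idx => (δ • ((Vᵀ)⁻¹ * Xᵀ * (V * P)) + ε • (X * P)) idx j)) -
        ε * (∑ i ∈ univ.erase a, P i j *
          ((fun idx => V idx a) ⬝ᵥ (fun idx => X idx i))) =
      (fun idx => δ * (V * P) idx j + ε * P a j * V idx a) ⬝ᵥ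
        (fun idx => X idx a) :=
  newcomer_computed_scalar_identity_general V P hV X δ ε
end

section
/- Let F_q be a finite field, k ≥ 1, V a nonsingular k×k matrix over F_q, P a super-regular k×k matrix over F_q, U = V·P, V̂ = (Vᵗ)⁻¹, and let δ, ε, δ', ε' ∈ F_q be nonzero scalars satisfying δδ' + εε' = 1 and εδ' + δε' = 0. For a k×k matrix X over F_q with columns x_1,…,x_k, let Y = δ V̂ Xᵗ U + ε X P with columns y_1,…,y_k. Then for every pair of subsets S, T ⊆ {1,…,k} with |S| + |T| = k, the linear map sending X to the tuple of columns ((x_i)_{i∈S}, (y_j)_{j∈T}) is injective; i.e., any k of the 2k stored vectors x_1,…,x_k, y_1,…,y_k determine X, so the code satisfies the MDS property. -/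
open Matrix Finset

/-- If `v` is supported on at most `|T|` coordinates and is in the left kernel of the
columns of a super-regular matrix `P` indexed by `T`, then `v = 0`. -/
lemma key_kernel {Fq : Type*} [Field Fq] {k : ℕ} (P : Matrix (Fin k) (Fin k) Fq)
    (hP : SuperRegular P) (T A : Finset (Fin k)) (hA : A.card ≤ T.card)
    (v : Fin k → Fq) (hsupp : ∀ i, i ∉ A → v i = 0)
    (hker : ∀ j ∈ T, ∑ l, v l * P l j = 0) : v = 0 := by
  have htk : T.card ≤ (univ : Finset (Fin k)).card := T.card_le_univ
  obtain ⟨A', hsub, hA'sub, hA'⟩ :=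
    Finset.exists_subsuperset_card_eq A.subset_univ hA htk
  let r : Fin T.card → Fin k := fun i => (A'.orderIsoOfFin hA' i : Fin k)
  let c : Fin T.card → Fin k := fun i => (T.orderIsoOfFin rfl i : Fin k)
  have hr : Function.Injective r :=
    Subtype.coe_injective.comp (A'.orderIsoOfFin hA').injective
  have hc : Function.Injective c :=
    Subtype.coe_injective.comp (T.orderIsoOfFin rfl).injective
  have hM : IsUnit ((P.submatrix r c).det) := hP _ r c hr hc
  have hsupp' : ∀ i, i ∉ A' → v i = 0 := fun i hi => hsupp i (fun h => hi (hsub h))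
  have hv' : Matrix.vecMul (v ∘ r) (P.submatrix r c) = 0 := by
    funext j
    have hcj : c j ∈ T := (T.orderIsoOfFin rfl j).2
    have hsum : ∑ i : Fin T.card, v (r i) * P (r i) (c j) = ∑ l, v l * P l (c j) :=
      calc ∑ i : Fin T.card, v (r i) * P (r i) (c j)
          = ∑ a : A', v a.1 * P a.1 (c j) :=
            Equiv.sum_comp (A'.orderIsoOfFin hA').toEquiv
              (fun a : A' => v a.1 * P a.1 (c j))
        _ = ∑ l ∈ A', v l * P l (c j) :=
            Finset.sum_coe_sort A' (fun a => v a * P a (c j))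
        _ = ∑ l, v l * P l (c j) :=
            Finset.sum_subset A'.subset_univ (fun x _ hx => by
              rw [hsupp' x hx, zero_mul])
    simp only [Matrix.vecMul, dotProduct, Function.comp_apply,
      Matrix.submatrix_apply, Pi.zero_apply]
    rw [hsum]
    exact hker _ hcj
  have hvr : v ∘ r = 0 := by
    have h := congrArg (fun w => Matrix.vecMul w (P.submatrix r c)⁻¹) hv'
    simpa [Matrix.vecMul_vecMul, Matrix.mul_nonsing_inv _ hM] using h
  funext i
  by_cases hi : i ∈ A'
  · have hri : r ((A'.orderIsoOfFin hA').symm ⟨i, hi⟩) = i :=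
      congrArg Subtype.val ((A'.orderIsoOfFin hA').apply_symm_apply ⟨i, hi⟩)
    have := congrFun hvr ((A'.orderIsoOfFin hA').symm ⟨i, hi⟩)
    rwa [Function.comp_apply, hri, Pi.zero_apply] at this
  · exact hsupp' i hi

/-- MDS property of the Suh-Ramchandran code: for any subsets `S, T` of
`{1,…,k}` with `|S| + |T| = k`, the map sending the data matrix `X` to the columns
`(x_i)_{i∈S}` of `X` together with the columns `(y_j)_{j∈T}` of
`Y = δ V̂ Xᵗ U + ε X P` is injective. -/
theorem suh_ramchandran_MDS
    {Fq : Type*} [Field Fq] [Fintype Fq] {k : ℕ} (hk : 1 ≤ k)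
    (V P : Matrix (Fin k) (Fin k) Fq)
    (hV : IsUnit V.det) (hP : SuperRegular P)
    (δ ε δ' ε' : Fq) (hδ : δ ≠ 0) (hε : ε ≠ 0) (hδ' : δ' ≠ 0) (hε' : ε' ≠ 0)
    (h1 : δ * δ' + ε * ε' = 1) (h2 : ε * δ' + δ * ε' = 0) :
    ∀ S T : Finset (Fin k), S.card + T.card = k →
      Function.Injective (fun X : Matrix (Fin k) (Fin k) Fq =>
        ((fun i : S => fun idx => X idx i.1),
         (fun j : T => fun idx =>
            (δ • ((Vᵀ)⁻¹ * Xᵀ * (V * P)) + ε • (X * P)) idx j.1))) := by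
  intro S T hST X X' h
  simp only [Prod.mk.injEq] at h
  obtain ⟨hfst, hsnd⟩ := h
  have hXcol : ∀ i ∈ S, ∀ idx, X idx i = X' idx i := fun i hi idx =>
    congrFun (congrFun hfst ⟨i, hi⟩) idx
  have hYcol : ∀ j ∈ T, ∀ idx,
      (δ • ((Vᵀ)⁻¹ * Xᵀ * (V * P)) + ε • (X * P)) idx j =
      (δ • ((Vᵀ)⁻¹ * X'ᵀ * (V * P)) + ε • (X' * P)) idx j := fun j hj idx =>
    congrFun (congrFun hsnd ⟨j, hj⟩) idx
  have hVT : IsUnit (Vᵀ).det := by rwa [Matrix.det_transpose]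
  set D : Matrix (Fin k) (Fin k) Fq := X - X' with hD
  set W : Matrix (Fin k) (Fin k) Fq := Vᵀ * D with hW
  -- columns of D on S vanish
  have hDcol : ∀ i ∈ S, ∀ l, D l i = 0 := by
    intro i hi l
    simp [hD, Matrix.sub_apply, sub_eq_zero, hXcol i hi l]
  -- columns of W on S vanish
  have hWcol : ∀ i ∈ S, ∀ l, W l i = 0 := by
    intro i hi l
    rw [hW, Matrix.mul_apply]
    exact Finset.sum_eq_zero fun m _ => by rw [hDcol i hi m, mul_zero]
  set M : Matrix (Fin k) (Fin k) Fq := δ • Wᵀ + ε • W with hM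
  have hMentry : ∀ i l, M i l = δ * W l i + ε * W i l := by
    intro i l
    simp [hM, Matrix.add_apply, Matrix.smul_apply, Matrix.transpose_apply, smul_eq_mul]
  -- M * P = Vᵀ * (Y(X) - Y(X'))
  have hfact : M * P =
      Vᵀ * ((δ • ((Vᵀ)⁻¹ * Xᵀ * (V * P)) + ε • (X * P)) -
            (δ • ((Vᵀ)⁻¹ * X'ᵀ * (V * P)) + ε • (X' * P))) := by
    have hinv : Vᵀ * (Vᵀ)⁻¹ = 1 := Matrix.mul_nonsing_inv _ hVT
    have hYD : (δ • ((Vᵀ)⁻¹ * Xᵀ * (V * P)) + ε • (X * P)) -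
            (δ • ((Vᵀ)⁻¹ * X'ᵀ * (V * P)) + ε • (X' * P)) =
        δ • ((Vᵀ)⁻¹ * Dᵀ * (V * P)) + ε • (D * P) := by
      rw [hD, Matrix.transpose_sub]
      rw [Matrix.mul_sub, Matrix.sub_mul, Matrix.sub_mul, smul_sub, smul_sub]
      abel
    have e1 : Vᵀ * ((Vᵀ)⁻¹ * Dᵀ * (V * P)) = Dᵀ * V * P := by
      rw [Matrix.mul_assoc ((Vᵀ)⁻¹), ← Matrix.mul_assoc Vᵀ, hinv, Matrix.one_mul,
        ← Matrix.mul_assoc]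
    have e2 : Vᵀ * (D * P) = Vᵀ * D * P := (Matrix.mul_assoc _ _ _).symm
    rw [hYD, hM, hW, Matrix.transpose_mul, Matrix.transpose_transpose,
      Matrix.mul_add, Matrix.mul_smul, Matrix.mul_smul, e1, e2,
      Matrix.add_mul, Matrix.smul_mul, Matrix.smul_mul]
  have hMP : ∀ j ∈ T, ∀ idx, (M * P) idx j = 0 := by
    intro j hj idx
    rw [hfact, Matrix.mul_apply]
    refine Finset.sum_eq_zero fun m _ => ?_
    rw [Matrix.sub_apply, hYcol j hj m, sub_self, mul_zero]
  have hScard : Sᶜ.card ≤ T.card := by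
    rw [Finset.card_compl]
    simp only [Fintype.card_fin]
    omega
  -- rows of W on S vanish
  have hWrow : ∀ i ∈ S, ∀ l, W i l = 0 := by
    intro i hi
    have hrow := key_kernel P hP T Sᶜ hScard (fun l => M i l)
      (fun l hl => by
        have hlS : l ∈ S := by simpa using hl
        show M i l = 0
        rw [hMentry, hWcol i hi l, hWcol l hlS i, mul_zero, mul_zero, add_zero])
      (fun j hj => by
        show ∑ l, M i l * P l j = 0
        rw [← Matrix.mul_apply]; exact hMP j hj i)
    intro l
    have := congrFun hrow l
    rw [hMentry, hWcol i hi l, mul_zero, zero_add, Pi.zero_apply] at this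
    exact (mul_eq_zero.mp this).resolve_left hε
  -- all rows of M vanish
  have hM0 : ∀ i l, M i l = 0 := by
    intro i
    have hrow := key_kernel P hP T Sᶜ hScard (fun l => M i l)
      (fun l hl => by
        have hlS : l ∈ S := by simpa using hl
        show M i l = 0
        rw [hMentry, hWrow l hlS i, hWcol l hlS i, mul_zero, mul_zero, add_zero])
      (fun j hj => by
        show ∑ l, M i l * P l j = 0
        rw [← Matrix.mul_apply]; exact hMP j hj i)
    exact fun l => congrFun hrow l
  -- deduce W = 0
  have hd : (δ - ε) * (δ' - ε') = 1 := by linear_combination h1 - h2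
  have hs : (δ + ε) * (δ' + ε') = 1 := by linear_combination h1 + h2
  have hne : (δ - ε) * (δ + ε) ≠ 0 :=
    mul_ne_zero (left_ne_zero_of_mul_eq_one hd) (left_ne_zero_of_mul_eq_one hs)
  have hW0 : W = 0 := by
    funext i l
    have e1 : δ * W l i + ε * W i l = 0 := by rw [← hMentry]; exact hM0 i l
    have e2 : δ * W i l + ε * W l i = 0 := by rw [← hMentry]; exact hM0 l i
    have key : (δ - ε) * (δ + ε) * W i l = 0 := by linear_combination δ * e2 - ε * e1
    simpa using (mul_eq_zero.mp key).resolve_left hne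
  -- conclude
  have hD0 : D = 0 := by
    have hVD : Vᵀ * D = 0 := hW.symm.trans hW0
    have h' := congrArg (fun Z => (Vᵀ)⁻¹ * Z) hVD
    simpa [← Matrix.mul_assoc, Matrix.nonsing_inv_mul _ hVT, Matrix.one_mul] using h'
  exact sub_eq_zero.mp hD0
end

section
/- Let F be a field, V and P nonsingular k×k matrices over F, Q = P⁻¹ = [q_{ij}], U = V·P, V̂ = (Vᵗ)⁻¹, and let δ, ε, δ', ε' ∈ F satisfy δδ' + εε' = 1 and εδ' + δε' = 0. Let X be any k×k matrix over F with columns x_1,…,x_k, set Y = δ V̂ Xᵗ U + ε X P with columns y_1,…,y_k, and let z'_j = ∑_{ℓ=1}^k q_{ℓj} y_ℓ be the j-th column of YQ. Then for all i, j ∈ {1,…,k}: v_iᵗ x_j = δ' (v_jᵗ z'_i) + ε' (v_iᵗ z'_j), where v_1,…,v_k are the columns of V. -/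
open Matrix

/-! Multiplying by `P⁻¹` and then by `Vᵀ` turns the parity matrix into
`Vᵀ Y P⁻¹ = δ (VᵀX)ᵀ + ε VᵀX`, whose entries are the products `v_aᵗ z'_b`. Each side of the
identity is then a combination of `(VᵀX)_{ij}` and `(VᵀX)_{ji}`, and the two relations between
the coding coefficients say exactly that the combination on the right collapses to `(VᵀX)_{ij}`. -/

theorem transpose_mul_parity_mul_inv {R n : Type*} [CommRing R] [Fintype n] [DecidableEq n]
    (V P X : Matrix n n R)
    (hV : IsUnit V.det) (hP : IsUnit P.det) (δ ε : R) :
    Vᵀ * ((δ • ((Vᵀ)⁻¹ * Xᵀ * (V * P)) + ε • (X * P)) * P⁻¹) =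
      δ • (Vᵀ * X)ᵀ + ε • (Vᵀ * X) := by
  have hVt : IsUnit Vᵀ.det := by rwa [det_transpose]
  rw [add_mul, smul_mul, smul_mul, Matrix.mul_assoc _ (V * P), Matrix.mul_assoc V,
    mul_nonsing_inv _ hP, Matrix.mul_one, Matrix.mul_assoc X, mul_nonsing_inv _ hP,
    Matrix.mul_one, Matrix.mul_add, Matrix.mul_smul, Matrix.mul_smul, ← Matrix.mul_assoc,
    ← Matrix.mul_assoc, mul_nonsing_inv _ hVt, Matrix.one_mul, transpose_mul, transpose_transpose]

theorem dual_coeff_combination {F : Type*} [Field F] {δ ε δ' ε' : F}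
    (h1 : δ * δ' + ε * ε' = 1) (h2 : ε * δ' + δ * ε' = 0) (m m' : F) :
    δ' * (δ * m + ε * m') + ε' * (δ * m' + ε * m) = m := by
  linear_combination m * h1 + m' * h2

/-- Dual identity: with `Y = δ V̂ Xᵗ U + ε X P`,
`z'_j = ∑ ℓ q_{ℓj} y_ℓ` and coding coefficients satisfying `δδ' + εε' = 1`,
`εδ' + δε' = 0`, for all `i, j`: `v_iᵗ x_j = δ' (v_jᵗ z'_i) + ε' (v_iᵗ z'_j)`. -/
theorem dual_downloaded_symbol_identity
    {F : Type*} [Field F] {k : ℕ}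
    (V P : Matrix (Fin k) (Fin k) F)
    (hV : IsUnit V.det) (hP : IsUnit P.det)
    (δ ε δ' ε' : F)
    (h1 : δ * δ' + ε * ε' = 1) (h2 : ε * δ' + δ * ε' = 0)
    (X : Matrix (Fin k) (Fin k) F)
    (Y : Matrix (Fin k) (Fin k) F)
    (hY : Y = δ • ((Vᵀ)⁻¹ * Xᵀ * (V * P)) + ε • (X * P))
    (z' : Fin k → Fin k → F)
    (hz' : ∀ j idx, z' j idx = ∑ ℓ, P⁻¹ ℓ j * Y idx ℓ) :
    ∀ i j : Fin k,
      (fun idx => V idx i) ⬝ᵥ (fun idx => X idx j) =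
        δ' * ((fun idx => V idx j) ⬝ᵥ z' i) +
        ε' * ((fun idx => V idx i) ⬝ᵥ z' j) := by
  intro i j
  have hz : ∀ b, z' b = fun idx => (Y * P⁻¹) idx b := fun b =>
    funext fun idx => by simp only [hz', mul_apply, mul_comm]
  have hVZ : ∀ a b, (fun idx => V idx a) ⬝ᵥ z' b = δ * (Vᵀ * X) b a + ε * (Vᵀ * X) a b := by
    intro a b
    rw [hz]
    change (Vᵀ * (Y * P⁻¹)) a b = _
    rw [hY, transpose_mul_parity_mul_inv V P X hV hP]
    rfl
  rw [hVZ, hVZ, dual_coeff_combination h1 h2]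
  rfl
end
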